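/- arXiv:1210.3335 — 6 statements merged into one kernel-verified Lean document; each statement's English description precedes it below -/
import Mathlib

section
/- Monotone Lemma: Let n ≥ 1, let A ∈ {0,1}^{n×n} be symmetric with a_{ii} = 1 for all i, let t ∈ (0,1), and suppose Ŷ (with 0 ≤ ŷ_{ij} ≤ 1 for all i,j) is the unique maximizer of the objective F_A over the box. Let Ã ∈ {0,1}^{n×n} be any symmetric matrix with ã_{ii} = 1 such that for every pair (i,j) with ã_{ij} ≠ a_{ij}, either a_{ij} = 0, ã_{ij} = 1 and ŷ_{ij} = 1, or a_{ij} = 1, ã_{ij} = 0 and ŷ_{ij} = 0. Then Ŷ is also the unique maximizer of F_Ã over the box. -/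
open MeasureTheory

open scoped ComplexOrder in
/-- The old Mathlib `Matrix.PosSemidef.sqrt` (removed since), with its old definition. -/
noncomputable def Matrix.PosSemidef.sqrtOld {m 𝕜 : Type*} [Fintype m] [DecidableEq m] [RCLike 𝕜]
    {A : Matrix m m 𝕜} (hA : A.PosSemidef) : Matrix m m 𝕜 :=
  hA.1.eigenvectorUnitary.1 * Matrix.diagonal ((↑) ∘ (Real.sqrt ·) ∘ hA.1.eigenvalues) *
    (star hA.1.eigenvectorUnitary : Matrix m m 𝕜)

/-- Nuclear norm: trace of the positive semidefinite square root of `Yᵀ Y`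
(equivalently, the sum of the singular values of `Y`). -/
noncomputable def nuclearNorm {n : ℕ} (Y : Matrix (Fin n) (Fin n) ℝ) : ℝ :=
  (Matrix.posSemidef_conjTranspose_mul_self Y).sqrtOld.trace

/-- The objective `F_A(Y) = c_𝒜 Σ_{a_ij=1} y_ij − c_{𝒜ᶜ} Σ_{a_ij=0} y_ij − 48√n ‖Y‖_*`
with `c_𝒜 = √((1−t)/t)` and `c_{𝒜ᶜ} = √(t/(1−t))`. -/
noncomputable def objective {n : ℕ} (A : Matrix (Fin n) (Fin n) ℝ) (t : ℝ)
    (Y : Matrix (Fin n) (Fin n) ℝ) : ℝ :=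
  Real.sqrt ((1 - t) / t) * (∑ i, ∑ j, if A i j = 1 then Y i j else 0)
    - Real.sqrt (t / (1 - t)) * (∑ i, ∑ j, if A i j = 0 then Y i j else 0)
    - 48 * Real.sqrt n * nuclearNorm Y

/-- The box `0 ≤ y_ij ≤ 1`. -/
def inBox {n : ℕ} (Y : Matrix (Fin n) (Fin n) ℝ) : Prop :=
  ∀ i j, 0 ≤ Y i j ∧ Y i j ≤ 1

/-- `Y0` is the unique maximizer of `F` over the box. -/
def isUniqueMaximizer {n : ℕ} (F : Matrix (Fin n) (Fin n) ℝ → ℝ)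
    (Y0 : Matrix (Fin n) (Fin n) ℝ) : Prop :=
  inBox Y0 ∧ ∀ Y, inBox Y → Y ≠ Y0 → F Y < F Y0

/-! `F_Ã − F_A` is linear in `Y`: its coefficient is `c_𝒜 + c_{𝒜ᶜ} ≥ 0` on an added edge, where
`ŷ_ij = 1` is the largest value allowed, and `−(c_𝒜 + c_{𝒜ᶜ})` on a removed edge, where `ŷ_ij = 0` is
the smallest. So this linear term is maximized over the box at `Ŷ`, and adding it to `F_A` keeps `Ŷ`
the unique maximizer. -/

open Finset

theorem isUniqueMaximizer_of_sub_le {n : ℕ} {F G : Matrix (Fin n) (Fin n) ℝ → ℝ}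
    {Y₀ : Matrix (Fin n) (Fin n) ℝ} (h : isUniqueMaximizer F Y₀)
    (hle : ∀ Y, inBox Y → G Y - F Y ≤ G Y₀ - F Y₀) : isUniqueMaximizer G Y₀ :=
  ⟨h.1, fun Y hY hne => by linarith [h.2 Y hY hne, hle Y hY]⟩

noncomputable def edgeWeight (t a : ℝ) : ℝ :=
  if a = 1 then √((1 - t) / t) else if a = 0 then -√(t / (1 - t)) else 0

theorem objective_eq_sum_edgeWeight {n : ℕ} (A : Matrix (Fin n) (Fin n) ℝ) (t : ℝ)
    (Y : Matrix (Fin n) (Fin n) ℝ) :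
    objective A t Y = ∑ i, ∑ j, edgeWeight t (A i j) * Y i j - 48 * √n * nuclearNorm Y := by
  simp only [objective, mul_sum, ← sum_sub_distrib]
  congr 1
  refine sum_congr rfl fun i _ => sum_congr rfl fun j _ => ?_
  unfold edgeWeight
  split_ifs <;> simp_all

theorem objective_sub_objective {n : ℕ} (A B : Matrix (Fin n) (Fin n) ℝ) (t : ℝ)
    (Y : Matrix (Fin n) (Fin n) ℝ) :
    objective B t Y - objective A t Y =
      ∑ i, ∑ j, (edgeWeight t (B i j) - edgeWeight t (A i j)) * Y i j := by
  simp only [objective_eq_sum_edgeWeight, sub_mul, sum_sub_distrib]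
  ring

theorem edgeWeight_sub_mul_le {t a b y ŷ : ℝ}
    (hchange : b ≠ a → (a = 0 ∧ b = 1 ∧ ŷ = 1) ∨ (a = 1 ∧ b = 0 ∧ ŷ = 0))
    (hy₀ : 0 ≤ y) (hy₁ : y ≤ 1) :
    (edgeWeight t b - edgeWeight t a) * y ≤ (edgeWeight t b - edgeWeight t a) * ŷ := by
  by_cases hba : b = a
  · simp [hba]
  have hc : 0 ≤ √((1 - t) / t) + √(t / (1 - t)) := by positivity
  rcases hchange hba with ⟨rfl, rfl, rfl⟩ | ⟨rfl, rfl, rfl⟩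
  · simp only [edgeWeight, one_ne_zero, zero_ne_one, if_false, if_true, sub_neg_eq_add]
    nlinarith
  · simp only [edgeWeight, one_ne_zero, zero_ne_one, if_false, if_true, mul_zero]
    nlinarith

theorem monotone_lemma_general {n : ℕ} (t : ℝ)
    (A Atil : Matrix (Fin n) (Fin n) ℝ)
    (Yhat : Matrix (Fin n) (Fin n) ℝ)
    (hopt : isUniqueMaximizer (objective A t) Yhat)
    (hchange : ∀ i j, Atil i j ≠ A i j →
      (A i j = 0 ∧ Atil i j = 1 ∧ Yhat i j = 1) ∨
      (A i j = 1 ∧ Atil i j = 0 ∧ Yhat i j = 0)) :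
    isUniqueMaximizer (objective Atil t) Yhat :=
  isUniqueMaximizer_of_sub_le hopt fun Y hY => by
    simp only [objective_sub_objective]
    exact sum_le_sum fun i _ => sum_le_sum fun j _ =>
      edgeWeight_sub_mul_le (hchange i j) (hY i j).1 (hY i j).2

/-- **Monotone Lemma.** If `Ŷ` is the unique maximizer of `F_A` over the box and `Ã` is
obtained from `A` by only adding edges where `ŷ_ij = 1` and removing edges where
`ŷ_ij = 0`, then `Ŷ` is also the unique maximizer of `F_Ã` over the box. -/
theorem monotone_lemma {n : ℕ} (hn : 1 ≤ n) (t : ℝ) (ht0 : 0 < t) (ht1 : t < 1)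
    (A Atil : Matrix (Fin n) (Fin n) ℝ)
    (hA01 : ∀ i j, A i j = 0 ∨ A i j = 1) (hAsymm : A.IsSymm)
    (hAdiag : ∀ i, A i i = 1)
    (hAtil01 : ∀ i j, Atil i j = 0 ∨ Atil i j = 1) (hAtilsymm : Atil.IsSymm)
    (hAtildiag : ∀ i, Atil i i = 1)
    (Yhat : Matrix (Fin n) (Fin n) ℝ)
    (hopt : isUniqueMaximizer (objective A t) Yhat)
    (hchange : ∀ i j, Atil i j ≠ A i j →
      (A i j = 0 ∧ Atil i j = 1 ∧ Yhat i j = 1) ∨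
      (A i j = 1 ∧ Atil i j = 0 ∧ Yhat i j = 0)) :
    isUniqueMaximizer (objective Atil t) Yhat :=
  monotone_lemma_general t A Atil Yhat hopt hchange
end

section
/- Converse Theorem: For every γ ∈ (0, 1/4] there exist a constant c₂ > 0 and an integer N such that for all n ≥ N the following holds. Let 0 < q < p < 1, let K, m, n₂ satisfy m ≥ 2, K ≥ γn, n₂ ≥ γn and mK + n₂ = n, and let 𝓕 be the family of all cluster matrices of partitions of an (mK)-element subset of {1,…,n} into m clusters of size exactly K. For Y* ∈ 𝓕, let A be the random symmetric 0/1 matrix with a_{ii} = 1 and independent entries a_{ij} (i < j) that are Bernoulli(p) if y*_{ij} = 1 and Bernoulli(q) otherwise. If there exists a measurable estimator Ŷ mapping symmetric 0/1 matrices to matrices such that P[Ŷ(A) = Y*] ≥ 3/4 for every Y* ∈ 𝓕, then (p − q)/√(p(1−q)) ≥ c₂/√n. -/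
open MeasureTheory


/-- Index set of unordered pairs `i < j`. -/
abbrev GraphPairs (n : ℕ) := {e : Fin n × Fin n // e.1 < e.2}

/-- Bernoulli measure on `Bool` with success probability `p`. -/
noncomputable def bernoulliMeasure (p : ℝ) : Measure Bool :=
  (Real.toNNReal p) • Measure.dirac true + (Real.toNNReal (1 - p)) • Measure.dirac false

instance (p : ℝ) : IsFiniteMeasure (bernoulliMeasure p) := by unfold bernoulliMeasure; infer_instance

/-- Product of Bernoulli measures over the pairs `i < j`. -/
noncomputable def graphMeasure {n : ℕ} (θ : GraphPairs n → ℝ) :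
    Measure (GraphPairs n → Bool) :=
  Measure.pi fun e => bernoulliMeasure (θ e)

/-- Symmetric 0/1 adjacency matrix (diagonal 1) built from the edge indicators. -/
noncomputable def adjacency {n : ℕ} (ω : GraphPairs n → Bool) :
    Matrix (Fin n) (Fin n) ℝ := fun i j =>
  if h : i < j then (if ω ⟨(i, j), h⟩ then 1 else 0)
  else if h' : j < i then (if ω ⟨(j, i), h'⟩ then 1 else 0)
  else 1

/-- Nodes `i` and `j` are in the same cluster. -/
def SameCluster {n r : ℕ} (part : Fin n → Option (Fin r)) (i j : Fin n) : Prop :=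
  part i ≠ none ∧ part i = part j

instance {n r : ℕ} (part : Fin n → Option (Fin r)) (i j : Fin n) :
    Decidable (SameCluster part i j) := by unfold SameCluster; infer_instance

/-- Cluster matrix of the partition `part` (`none` = outlier). -/
noncomputable def clusterMatrix {n r : ℕ} (part : Fin n → Option (Fin r)) :
    Matrix (Fin n) (Fin n) ℝ := fun i j =>
  if SameCluster part i j then 1 else 0

/-- Measurable structure on matrices: the Borel product σ-algebra. -/
instance {n : ℕ} : MeasurableSpace (Matrix (Fin n) (Fin n) ℝ) := by
  unfold Matrix; infer_instance

/-!
Le Cam's two-point method. Let `σ` put the first `mK` nodes into `m` consecutive blocks of size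
`K` and the rest out, and let `σ'` be `σ` with node `0` (clustered) and node `mK` (an outlier)
swapped. Their cluster matrices differ, so a successful estimator yields disjoint events of
probability at least `3/4` under the two graph laws, and Cauchy–Schwarz on such an event and its
complement bounds the Bhattacharyya coefficient `∑ √(P ω · P' ω)` of the laws by `7/8`. Both laws
are products of Bernoulli laws, so this coefficient is the product of the per-edge coefficients;
these equal `1` except on the at most `4n` edges at node `0` or `mK`, where they are at least
`1 - (p - q)² / (p(1 - q))`. Hence `1 - 4n (p - q)² / (p(1 - q)) ≤ 7/8`.
-/
open Finset

def bernoulliWeight (r : ℝ) (b : Bool) : ℝ := if b then r else 1 - r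

lemma bernoulliWeight_nonneg {r : ℝ} (h0 : 0 ≤ r) (h1 : r ≤ 1) (b : Bool) :
    0 ≤ bernoulliWeight r b := by
  unfold bernoulliWeight; split_ifs <;> linarith

lemma bernoulliMeasure_singleton (r : ℝ) (b : Bool) :
    bernoulliMeasure r {b} = ENNReal.ofReal (bernoulliWeight r b) := by
  cases b <;> simp [bernoulliMeasure, bernoulliWeight, ENNReal.ofReal]

/-- The Bhattacharyya coefficient of the Bernoulli laws with parameters `r` and `s`. -/
noncomputable def bernoulliAffinity (r s : ℝ) : ℝ := √(r * s) + √((1 - r) * (1 - s))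

lemma bernoulliAffinity_comm (r s : ℝ) : bernoulliAffinity r s = bernoulliAffinity s r := by
  simp only [bernoulliAffinity, mul_comm]

lemma bernoulliAffinity_self {r : ℝ} (h0 : 0 ≤ r) (h1 : r ≤ 1) : bernoulliAffinity r r = 1 := by
  rw [bernoulliAffinity, Real.sqrt_mul_self h0, Real.sqrt_mul_self (by linarith)]
  ring

lemma sq_sqrt_sub_sqrt_mul_le {a b : ℝ} (ha : 0 ≤ a) (hb : 0 ≤ b) :
    (√a - √b) ^ 2 * a ≤ (a - b) ^ 2 := by
  have hfactor : (a - b) ^ 2 = (√a - √b) ^ 2 * (√a + √b) ^ 2 := by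
    rw [← mul_pow, mul_comm, ← sq_sub_sq, Real.sq_sqrt ha, Real.sq_sqrt hb]
  have ha_le : a ≤ (√a + √b) ^ 2 := by
    nlinarith [Real.sq_sqrt ha, Real.sqrt_nonneg a, Real.sqrt_nonneg b]
  rw [hfactor]
  exact mul_le_mul_of_nonneg_left ha_le (sq_nonneg _)

lemma one_sub_le_bernoulliAffinity {p q : ℝ} (hq : 0 < q) (hqp : q < p) (hp : p < 1) :
    1 - (p - q) ^ 2 / (p * (1 - q)) ≤ bernoulliAffinity p q := by
  have hp0 : 0 < p := hq.trans hqp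
  have hq1 : 0 < 1 - q := by linarith
  have hsum : 2 - 2 * bernoulliAffinity p q
      = (√p - √q) ^ 2 + (√(1 - q) - √(1 - p)) ^ 2 := by
    rw [bernoulliAffinity, Real.sqrt_mul hp0.le, Real.sqrt_mul (by linarith : 0 ≤ 1 - p)]
    nlinarith [Real.sq_sqrt hp0.le, Real.sq_sqrt hq.le, Real.sq_sqrt hq1.le,
      Real.sq_sqrt (by linarith : 0 ≤ 1 - p)]
  have h₁ := sq_sqrt_sub_sqrt_mul_le hp0.le hq.le
  have h₂ := sq_sqrt_sub_sqrt_mul_le hq1.le (by linarith : 0 ≤ 1 - p)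
  rw [show 1 - q - (1 - p) = p - q by ring] at h₂
  have hδ : (√p - √q) ^ 2 + (√(1 - q) - √(1 - p)) ^ 2 ≤ 2 * ((p - q) ^ 2 / (p * (1 - q))) := by
    rw [mul_div_assoc', le_div_iff₀ (mul_pos hp0 hq1)]
    nlinarith [mul_le_mul_of_nonneg_right h₁ hq1.le, mul_le_mul_of_nonneg_right h₂ hp0.le,
      sq_nonneg (√p - √q), sq_nonneg (√(1 - q) - √(1 - p)), sq_nonneg (p - q)]
  linarith

section ProductWeights

variable {ι : Type*} [Fintype ι]

def productWeight (θ : ι → ℝ) (ω : ι → Bool) : ℝ := ∏ i, bernoulliWeight (θ i) (ω i)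

lemma productWeight_nonneg {θ : ι → ℝ} (h0 : ∀ i, 0 ≤ θ i) (h1 : ∀ i, θ i ≤ 1)
    (ω : ι → Bool) : 0 ≤ productWeight θ ω :=
  prod_nonneg fun i _ => bernoulliWeight_nonneg (h0 i) (h1 i) (ω i)

lemma sum_productWeight [DecidableEq ι] (θ : ι → ℝ) : ∑ ω, productWeight θ ω = 1 := by
  calc ∑ ω, productWeight θ ω = ∏ i, ∑ b, bernoulliWeight (θ i) b :=
        (Fintype.prod_sum fun i b => bernoulliWeight (θ i) b).symm
    _ = 1 := by simp [bernoulliWeight]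

lemma sum_sqrt_productWeight_mul [DecidableEq ι] {θ θ' : ι → ℝ} (h0 : ∀ i, 0 ≤ θ i)
    (h1 : ∀ i, θ i ≤ 1) (h0' : ∀ i, 0 ≤ θ' i) (h1' : ∀ i, θ' i ≤ 1) :
    ∑ ω, √(productWeight θ ω * productWeight θ' ω) = ∏ i, bernoulliAffinity (θ i) (θ' i) := by
  have hfactor : ∀ ω : ι → Bool, √(productWeight θ ω * productWeight θ' ω)
      = ∏ i, √(bernoulliWeight (θ i) (ω i) * bernoulliWeight (θ' i) (ω i)) := fun ω => by
    rw [productWeight, productWeight, ← prod_mul_distrib, Real.sqrt_prod _ fun i _ =>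
      mul_nonneg (bernoulliWeight_nonneg (h0 i) (h1 i) _)
        (bernoulliWeight_nonneg (h0' i) (h1' i) _)]
  rw [Fintype.sum_congr _ _ hfactor,
    ← Fintype.prod_sum fun i b => √(bernoulliWeight (θ i) b * bernoulliWeight (θ' i) b)]
  simp [bernoulliWeight, bernoulliAffinity]

lemma pi_bernoulliMeasure_finset {θ : ι → ℝ} (h0 : ∀ i, 0 ≤ θ i) (h1 : ∀ i, θ i ≤ 1)
    (F : Finset (ι → Bool)) :
    Measure.pi (fun i => bernoulliMeasure (θ i)) F
      = ENNReal.ofReal (∑ ω ∈ F, productWeight θ ω) := by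
  rw [← sum_measure_singleton, ENNReal.ofReal_sum_of_nonneg fun ω _ => productWeight_nonneg h0 h1 ω]
  refine sum_congr rfl fun ω _ => ?_
  rw [← Set.univ_pi_singleton ω, Measure.pi_pi, productWeight,
    ENNReal.ofReal_prod_of_nonneg fun i _ => bernoulliWeight_nonneg (h0 i) (h1 i) (ω i)]
  exact prod_congr rfl fun i _ => bernoulliMeasure_singleton (θ i) (ω i)

end ProductWeights

section TwoPointTesting

variable {α : Type*} [Fintype α] {a b : α → ℝ}

lemma sum_sqrt_mul_le_bernoulliAffinity (ha : ∀ x, 0 ≤ a x) (hb : ∀ x, 0 ≤ b x)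
    (ha1 : ∑ x, a x = 1) (hb1 : ∑ x, b x = 1) (S : Finset α) :
    ∑ x, √(a x * b x) ≤ bernoulliAffinity (∑ x ∈ S, a x) (∑ x ∈ S, b x) := by
  classical
  have hcompl : ∀ f : α → ℝ, ∑ x, f x = 1 → ∑ x ∈ Sᶜ, f x = 1 - ∑ x ∈ S, f x := fun f hf => by
    rw [← hf, ← sum_add_sum_compl S f]; ring
  have hCS : ∀ T : Finset α, ∑ x ∈ T, √(a x * b x) ≤ √((∑ x ∈ T, a x) * ∑ x ∈ T, b x) :=
    fun T => by
      rw [Real.sqrt_mul (sum_nonneg fun x _ => ha x)]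
      simpa only [Real.sqrt_mul (ha _)] using Real.sum_sqrt_mul_sqrt_le T ha hb
  rw [← sum_add_sum_compl S, bernoulliAffinity, ← hcompl a ha1, ← hcompl b hb1]
  exact add_le_add (hCS S) (hCS Sᶜ)

lemma bernoulliAffinity_le_of_separated {x y : ℝ} (hx : 3 / 4 ≤ x) (hx1 : x ≤ 1) (hy0 : 0 ≤ y)
    (hy : y ≤ 1 / 4) : bernoulliAffinity x y ≤ 7 / 8 := by
  have h₁ : √(x * y) ≤ x / 4 + y :=
    Real.sqrt_le_iff.2 ⟨by positivity, by nlinarith [sq_nonneg (x / 4 - y)]⟩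
  have h₂ : √((1 - x) * (1 - y)) ≤ (1 - x) + (1 - y) / 4 :=
    Real.sqrt_le_iff.2 ⟨by linarith, by nlinarith [sq_nonneg ((1 - x) - (1 - y) / 4)]⟩
  rw [bernoulliAffinity]
  linarith

lemma sum_sqrt_mul_le_of_disjoint (ha : ∀ x, 0 ≤ a x) (hb : ∀ x, 0 ≤ b x)
    (ha1 : ∑ x, a x = 1) (hb1 : ∑ x, b x = 1) {S T : Finset α} (hST : Disjoint S T)
    (hS : 3 / 4 ≤ ∑ x ∈ S, a x) (hT : 3 / 4 ≤ ∑ x ∈ T, b x) :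
    ∑ x, √(a x * b x) ≤ 7 / 8 := by
  classical
  have haS : ∑ x ∈ S, a x ≤ 1 := ha1 ▸ sum_le_univ_sum_of_nonneg ha
  have hbS : ∑ x ∈ S, b x ≤ 1 / 4 := by
    have := sum_le_univ_sum_of_nonneg (s := S ∪ T) hb
    rw [sum_union hST, hb1] at this
    linarith
  exact (sum_sqrt_mul_le_bernoulliAffinity ha hb ha1 hb1 S).trans
    (bernoulliAffinity_le_of_separated hS haS (sum_nonneg fun x _ => hb x) hbS)

end TwoPointTesting

lemma prod_bernoulliAffinity_le_of_disjoint {ι : Type*} [Fintype ι] {θ θ' : ι → ℝ}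
    (h0 : ∀ i, 0 ≤ θ i) (h1 : ∀ i, θ i ≤ 1) (h0' : ∀ i, 0 ≤ θ' i) (h1' : ∀ i, θ' i ≤ 1)
    {S S' : Set (ι → Bool)} (hSS' : Disjoint S S')
    (hS : Measure.pi (fun i => bernoulliMeasure (θ i)) S ≥ ENNReal.ofReal (3 / 4))
    (hS' : Measure.pi (fun i => bernoulliMeasure (θ' i)) S' ≥ ENNReal.ofReal (3 / 4)) :
    ∏ i, bernoulliAffinity (θ i) (θ' i) ≤ 7 / 8 := by
  classical
  have hmass : ∀ {φ : ι → ℝ}, (∀ i, 0 ≤ φ i) → (∀ i, φ i ≤ 1) → ∀ T : Set (ι → Bool),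
      Measure.pi (fun i => bernoulliMeasure (φ i)) T ≥ ENNReal.ofReal (3 / 4) →
      3 / 4 ≤ ∑ ω ∈ T.toFinset, productWeight φ ω := fun hφ0 hφ1 T hT => by
    rwa [← Set.coe_toFinset T, pi_bernoulliMeasure_finset hφ0 hφ1, ge_iff_le,
      ENNReal.ofReal_le_ofReal_iff (sum_nonneg fun ω _ => productWeight_nonneg hφ0 hφ1 ω)] at hT
  rw [← sum_sqrt_productWeight_mul h0 h1 h0' h1']
  exact sum_sqrt_mul_le_of_disjoint (productWeight_nonneg h0 h1) (productWeight_nonneg h0' h1')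
    (sum_productWeight θ) (sum_productWeight θ') (Set.disjoint_toFinset.2 hSS')
    (hmass h0 h1 S hS) (hmass h0' h1' S' hS')

lemma one_sub_card_mul_le_prod {ι : Type*} [Fintype ι] {f : ι → ℝ} {δ : ℝ} (D : Finset ι)
    (hδ : δ ≤ 1) (hf : ∀ i ∈ D, 1 - δ ≤ f i) (hD : ∀ i ∉ D, f i = 1) :
    1 - #D * δ ≤ ∏ i, f i := by
  rw [← prod_subset (subset_univ D) fun i _ hi => hD i hi]
  calc 1 - #D * δ = 1 + #D * (-δ) := by ring
    _ ≤ (1 + -δ) ^ #D := one_add_mul_le_pow (by linarith) _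
    _ = ∏ _i ∈ D, (1 - δ) := by rw [prod_const, ← sub_eq_add_neg]
    _ ≤ ∏ i ∈ D, f i := prod_le_prod (fun _ _ => by linarith) hf

lemma one_sub_le_bernoulliAffinity_of_eq_or {p q r s : ℝ} (hq : 0 < q) (hqp : q < p) (hp : p < 1)
    (hr : r = p ∨ r = q) (hs : s = p ∨ s = q) :
    1 - (p - q) ^ 2 / (p * (1 - q)) ≤ bernoulliAffinity r s := by
  have hδ : 0 ≤ (p - q) ^ 2 / (p * (1 - q)) :=
    div_nonneg (sq_nonneg _) (mul_nonneg (by linarith) (by linarith))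
  rcases hr with rfl | rfl <;> rcases hs with rfl | rfl
  · rw [bernoulliAffinity_self (by linarith) hp.le]; linarith
  · exact one_sub_le_bernoulliAffinity hq hqp hp
  · rw [bernoulliAffinity_comm]; exact one_sub_le_bernoulliAffinity hq hqp hp
  · rw [bernoulliAffinity_self hq.le (by linarith)]; linarith

section Model

variable {n m : ℕ}

def edgeProb (σ : Fin n → Option (Fin m)) (p q : ℝ) (e : GraphPairs n) : ℝ :=
  if SameCluster σ e.1.1 e.1.2 then p else q

lemma edgeProb_eq_or (σ : Fin n → Option (Fin m)) (p q : ℝ) (e : GraphPairs n) :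
    edgeProb σ p q e = p ∨ edgeProb σ p q e = q := by
  unfold edgeProb; split_ifs <;> simp

lemma edgeProb_nonneg (σ : Fin n → Option (Fin m)) {p q : ℝ} (hp : 0 ≤ p) (hq : 0 ≤ q)
    (e : GraphPairs n) : 0 ≤ edgeProb σ p q e := by
  rcases edgeProb_eq_or σ p q e with h | h <;> rw [h] <;> assumption

lemma edgeProb_le_one (σ : Fin n → Option (Fin m)) {p q : ℝ} (hp : p ≤ 1) (hq : q ≤ 1)
    (e : GraphPairs n) : edgeProb σ p q e ≤ 1 := by
  rcases edgeProb_eq_or σ p q e with h | h <;> rw [h] <;> assumption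

def incidentPairs (s : Finset (Fin n)) : Finset (GraphPairs n) :=
  univ.filter fun e => e.1.1 ∈ s ∨ e.1.2 ∈ s

lemma card_incidentPairs_le (s : Finset (Fin n)) : #(incidentPairs s) ≤ 2 * #s * n := by
  classical
  calc #(incidentPairs s) = #((incidentPairs s).map (Function.Embedding.subtype _)) :=
        (card_map _).symm
    _ ≤ #(s ×ˢ univ ∪ univ ×ˢ s) := card_le_card fun x hx => by
        obtain ⟨e, he, rfl⟩ := mem_map.1 hx
        simpa [incidentPairs] using he
    _ ≤ #(s ×ˢ univ) + #(univ ×ˢ s) := card_union_le _ _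
    _ = 2 * #s * n := by simp only [card_product, card_univ, Fintype.card_fin]; ring

lemma edgeProb_comp_swap {σ : Fin n → Option (Fin m)} {u v : Fin n} {e : GraphPairs n}
    (he : e ∉ incidentPairs {u, v}) (p q : ℝ) :
    edgeProb (σ ∘ Equiv.swap u v) p q e = edgeProb σ p q e := by
  simp only [incidentPairs, mem_filter, mem_univ, true_and, mem_insert, mem_singleton,
    not_or] at he
  simp [edgeProb, SameCluster, Equiv.swap_apply_of_ne_of_ne, he]

lemma one_sub_mul_le_prod_bernoulliAffinity_comp_swap (σ : Fin n → Option (Fin m)) (u v : Fin n)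
    {p q : ℝ} (hq : 0 < q) (hqp : q < p) (hp : p < 1) :
    1 - 4 * n * ((p - q) ^ 2 / (p * (1 - q)))
      ≤ ∏ e, bernoulliAffinity (edgeProb σ p q e) (edgeProb (σ ∘ Equiv.swap u v) p q e) := by
  have hδ0 : 0 ≤ (p - q) ^ 2 / (p * (1 - q)) :=
    div_nonneg (sq_nonneg _) (mul_nonneg (by linarith) (by linarith))
  have hδ1 : (p - q) ^ 2 / (p * (1 - q)) ≤ 1 := by
    rw [div_le_one (mul_pos (by linarith) (by linarith))]
    nlinarith
  have hcard : (#(incidentPairs {u, v}) : ℝ) ≤ 4 * n := by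
    have := (card_incidentPairs_le {u, v}).trans
      (Nat.mul_le_mul_right n (Nat.mul_le_mul_left 2 (card_le_two (a := u) (b := v))))
    exact_mod_cast this
  calc 1 - 4 * n * ((p - q) ^ 2 / (p * (1 - q)))
      ≤ 1 - #(incidentPairs {u, v}) * ((p - q) ^ 2 / (p * (1 - q))) := by gcongr
    _ ≤ _ := one_sub_card_mul_le_prod _ hδ1
        (fun e _ => one_sub_le_bernoulliAffinity_of_eq_or hq hqp hp
          (edgeProb_eq_or σ p q e) (edgeProb_eq_or _ p q e))
        (fun e he => by
          rw [edgeProb_comp_swap he, bernoulliAffinity_self (edgeProb_nonneg σ (by linarith)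
            hq.le e) (edgeProb_le_one σ hp.le (by linarith) e)])

def blockPartition (n m K : ℕ) : Fin n → Option (Fin m) := fun i =>
  if h : (i : ℕ) < m * K then some ⟨i / K, Nat.div_lt_of_lt_mul (by rwa [mul_comm])⟩ else none

lemma blockPartition_eq_some_iff {K : ℕ} (i : Fin n) (c : Fin m) :
    blockPartition n m K i = some c ↔ (c : ℕ) * K ≤ i ∧ (i : ℕ) < c * K + K := by
  have hcK : (c : ℕ) * K + K ≤ m * K := by nlinarith [c.2]
  unfold blockPartition
  split_ifs with h
  · have hK : 0 < K := Nat.pos_of_ne_zero (by rintro rfl; simp at h)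
    simp only [Option.some.injEq, Fin.ext_iff, Nat.div_eq_iff hK]
    omega
  · simp only [false_iff]
    omega

lemma blockPartition_eq_none_iff {K : ℕ} (i : Fin n) :
    blockPartition n m K i = none ↔ m * K ≤ i := by
  simp [blockPartition]

lemma card_filter_blockPartition {K : ℕ} (hn : m * K ≤ n) (c : Fin m) :
    #(univ.filter fun i => blockPartition n m K i = some c) = K := by
  have hlt : ∀ j ∈ Ico ((c : ℕ) * K) (c * K + K), j < n := fun j hj => by
    have := mem_Ico.1 hj
    nlinarith [c.2]
  rw [show univ.filter (fun i => blockPartition n m K i = some c)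
      = (Ico ((c : ℕ) * K) (c * K + K)).attachFin hlt by
    ext i; simp [blockPartition_eq_some_iff], card_attachFin, Nat.card_Ico]
  omega

lemma clusterMatrix_ne_comp_swap {σ : Fin n → Option (Fin m)} {u v : Fin n} (hu : σ u ≠ none)
    (hv : σ v = none) : clusterMatrix σ ≠ clusterMatrix (σ ∘ Equiv.swap u v) := fun h => by
  have := congrFun (congrFun h u) u
  simp [clusterMatrix, SameCluster, hu, hv] at this

end Model

lemma div_sqrt_le_div_sqrt {c x N D : ℝ} (hc : 0 ≤ c) (hx : 0 ≤ x) (hN : 0 < N) (hD : 0 < D)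
    (h : c ^ 2 * D ≤ x ^ 2 * N) : c / √N ≤ x / √D := by
  rw [div_le_div_iff₀ (Real.sqrt_pos.2 hN) (Real.sqrt_pos.2 hD),
    ← pow_le_pow_iff_left₀ (by positivity) (by positivity) two_ne_zero, mul_pow, mul_pow,
    Real.sq_sqrt hN.le, Real.sq_sqrt hD.le]
  exact h

theorem converse_theorem_general (γ : ℝ) (hγ0 : 0 < γ) :
    ∃ c₂ : ℝ, 0 < c₂ ∧ ∃ N : ℕ, ∀ n : ℕ, N ≤ n →
      ∀ p q : ℝ, 0 < q → q < p → p < 1 →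
      ∀ m K n₂ : ℕ, 2 ≤ m → γ * n ≤ K → γ * n ≤ n₂ → m * K + n₂ = n →
      ∀ Yhat : Matrix (Fin n) (Fin n) ℝ → Matrix (Fin n) (Fin n) ℝ,
        Measurable Yhat →
        (∀ σ : Fin n → Option (Fin m),
          (∀ c : Fin m, (Finset.univ.filter fun i => σ i = some c).card = K) →
          graphMeasure (fun e : GraphPairs n =>
              if SameCluster σ e.1.1 e.1.2 then p else q)
            {ω | Yhat (adjacency ω) = clusterMatrix σ} ≥ ENNReal.ofReal (3 / 4)) →
        (p - q) / Real.sqrt (p * (1 - q)) ≥ c₂ / Real.sqrt n := by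
  refine ⟨1 / 8, by norm_num, ⌈γ⁻¹⌉₊, ?_⟩
  intro n hn p q hq hqp hp m K n₂ hm hKγ hn₂γ hsum Yhat _ hrec
  have hγn : 1 ≤ γ * n := by
    rw [← mul_inv_cancel₀ hγ0.ne']
    exact mul_le_mul_of_nonneg_left ((Nat.le_ceil _).trans (by exact_mod_cast hn)) hγ0.le
  have hK : 0 < K := Nat.cast_pos.1 (by linarith : (0 : ℝ) < K)
  have hn₂ : 0 < n₂ := Nat.cast_pos.1 (by linarith : (0 : ℝ) < n₂)
  have hmKn : m * K < n := by omega
  have hmK : 0 < m * K := Nat.mul_pos (by omega) hK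
  set σ := blockPartition n m K
  set u : Fin n := ⟨0, by omega⟩
  set v : Fin n := ⟨m * K, hmKn⟩
  set σ' := σ ∘ Equiv.swap u v
  have hσ := card_filter_blockPartition (n := n) hmKn.le
  have hne : clusterMatrix σ ≠ clusterMatrix σ' :=
    clusterMatrix_ne_comp_swap ((blockPartition_eq_none_iff u).not.2 (by simp only [u]; omega))
      ((blockPartition_eq_none_iff v).2 le_rfl)
  have hupper := prod_bernoulliAffinity_le_of_disjoint (θ := edgeProb σ p q) (θ' := edgeProb σ' p q)
    (edgeProb_nonneg σ (by linarith) hq.le) (edgeProb_le_one σ hp.le (by linarith))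
    (edgeProb_nonneg σ' (by linarith) hq.le) (edgeProb_le_one σ' hp.le (by linarith))
    (Set.disjoint_left.2 fun ω h h' => hne (h.symm.trans h'))
    (hrec σ hσ)
    (hrec σ' fun c => (card_equiv (Equiv.swap u v) fun _ => by simp [σ', σ]).trans (hσ c))
  have hlower := one_sub_mul_le_prod_bernoulliAffinity_comp_swap σ u v hq hqp hp
  have hD : 0 < p * (1 - q) := mul_pos (by linarith) (by linarith)
  have hδ : 1 / 8 ≤ 4 * n * ((p - q) ^ 2 / (p * (1 - q))) := by linarith
  rw [mul_div_assoc', le_div_iff₀ hD] at hδ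
  refine div_sqrt_le_div_sqrt (by norm_num) (by linarith) (Nat.cast_pos.2 (by omega)) hD ?_
  nlinarith [mul_nonneg (Nat.cast_nonneg (α := ℝ) n) (sq_nonneg (p - q))]

/-- **Converse Theorem.** For every `γ ∈ (0, 1/4]` there are `c₂ > 0` and `N` such that for
`n ≥ N`, clusters of equal size `K ≥ γn`, `n₂ ≥ γn` outliers and `mK + n₂ = n`: if some
measurable estimator recovers every cluster matrix of `m` clusters of size exactly `K` with
probability at least `3/4`, then `(p − q)/√(p(1−q)) ≥ c₂/√n`. -/
theorem converse_theorem (γ : ℝ) (hγ0 : 0 < γ) (hγ1 : γ ≤ 1 / 4) :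
    ∃ c₂ : ℝ, 0 < c₂ ∧ ∃ N : ℕ, ∀ n : ℕ, N ≤ n →
      ∀ p q : ℝ, 0 < q → q < p → p < 1 →
      ∀ m K n₂ : ℕ, 2 ≤ m → γ * n ≤ K → γ * n ≤ n₂ → m * K + n₂ = n →
      ∀ Yhat : Matrix (Fin n) (Fin n) ℝ → Matrix (Fin n) (Fin n) ℝ,
        Measurable Yhat →
        (∀ σ : Fin n → Option (Fin m),
          (∀ c : Fin m, (Finset.univ.filter fun i => σ i = some c).card = K) →
          graphMeasure (fun e : GraphPairs n =>
              if SameCluster σ e.1.1 e.1.2 then p else q)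
            {ω | Yhat (adjacency ω) = clusterMatrix σ} ≥ ENNReal.ofReal (3 / 4)) →
        (p - q) / Real.sqrt (p * (1 - q)) ≥ c₂ / Real.sqrt n :=
  converse_theorem_general γ hγ0
end

section
/- KL divergence bound for Bernoulli mixtures: Let α, p, q ∈ (0,1) and set γ = αp + (1−α)q. Then α·p·log(p/γ) + α·(1−p)·log((1−p)/(1−γ)) + (1−α)·q·log(q/γ) + (1−α)·(1−q)·log((1−q)/(1−γ)) ≤ α(1−α)(p−q)² / (γ(1−γ)). -/
/-! Both conditional laws are compared with the mixture `γ = αp + (1−α)q`. Since `log x ≤ x − 1`,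
each Kullback–Leibler divergence `D(Ber u ‖ Ber γ)` is at most the χ²-divergence
`(u − γ)²/(γ(1−γ))`, and the `α`-average of `(p − γ)²` and `(q − γ)²` is the variance
`α(1−α)(p − q)²` of the two-point law of the conditional means. -/

open Real

lemma mul_log_div_le {u v : ℝ} (hu : 0 ≤ u) (hv : 0 < v) :
    u * log (u / v) ≤ u ^ 2 / v - u := by
  rcases hu.eq_or_lt with rfl | hu
  · simp
  calc u * log (u / v) ≤ u * (u / v - 1) :=
        mul_le_mul_of_nonneg_left (log_le_sub_one_of_pos (by positivity)) hu.le
    _ = u ^ 2 / v - u := by ring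

lemma bernoulli_kl_le_chiSq {u v : ℝ} (hu0 : 0 ≤ u) (hu1 : u ≤ 1) (hv0 : 0 < v) (hv1 : v < 1) :
    u * log (u / v) + (1 - u) * log ((1 - u) / (1 - v)) ≤ (u - v) ^ 2 / (v * (1 - v)) := by
  have hv1' : 0 < 1 - v := by linarith
  calc u * log (u / v) + (1 - u) * log ((1 - u) / (1 - v))
      ≤ (u ^ 2 / v - u) + ((1 - u) ^ 2 / (1 - v) - (1 - u)) :=
        add_le_add (mul_log_div_le hu0 hv0) (mul_log_div_le (by linarith) hv1')
    _ = (u - v) ^ 2 / (v * (1 - v)) := by field_simp; ring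

/-- **KL divergence bound for Bernoulli mixtures.** With `γ = αp + (1−α)q`, the expected
Kullback–Leibler divergence `E_y[D(P(a|y) ‖ P(a))]` is at most `α(1−α)(p−q)²/(γ(1−γ))`. -/
theorem kl_bernoulli_mixture_bound (α p q : ℝ)
    (hα0 : 0 < α) (hα1 : α < 1) (hp0 : 0 < p) (hp1 : p < 1) (hq0 : 0 < q) (hq1 : q < 1) :
    α * p * Real.log (p / (α * p + (1 - α) * q)) +
      α * (1 - p) * Real.log ((1 - p) / (1 - (α * p + (1 - α) * q))) +
      (1 - α) * q * Real.log (q / (α * p + (1 - α) * q)) +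
      (1 - α) * (1 - q) * Real.log ((1 - q) / (1 - (α * p + (1 - α) * q))) ≤
    α * (1 - α) * (p - q) ^ 2 /
      ((α * p + (1 - α) * q) * (1 - (α * p + (1 - α) * q))) := by
  set γ := α * p + (1 - α) * q with hγ
  have hγ0 : 0 < γ := by positivity
  have hγ1 : γ < 1 := by nlinarith
  have hkl_p := bernoulli_kl_le_chiSq hp0.le hp1.le hγ0 hγ1
  have hkl_q := bernoulli_kl_le_chiSq hq0.le hq1.le hγ0 hγ1
  have variance : α * (p - γ) ^ 2 + (1 - α) * (q - γ) ^ 2 = α * (1 - α) * (p - q) ^ 2 := by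
    rw [hγ]; ring
  calc _ = α * (p * log (p / γ) + (1 - p) * log ((1 - p) / (1 - γ))) +
        (1 - α) * (q * log (q / γ) + (1 - q) * log ((1 - q) / (1 - γ))) := by ring
    _ ≤ α * ((p - γ) ^ 2 / (γ * (1 - γ))) + (1 - α) * ((q - γ) ^ 2 / (γ * (1 - γ))) := by
        gcongr
    _ = α * (1 - α) * (p - q) ^ 2 / (γ * (1 - γ)) := by rw [← variance]; ring
end

section
/- Gap detection from perturbed eigenvalues: Let n = rK with integers r ≥ 2, K ≥ 2, let p > q be reals, let δ ≥ 0, and define λ₁ = K(p−q) + nq + (1−p), λ_i = K(p−q) + (1−p) for 2 ≤ i ≤ r, and λ_i = 1−p for r+1 ≤ i ≤ n. Suppose λ̂₁ ≥ λ̂₂ ≥ … ≥ λ̂_n are real numbers with |λ̂_i − λ_i| ≤ δ for all i, and K(p−q) > 4δ. Then for every i ∈ {2,…,n−1} with i ≠ r one has λ̂_r − λ̂_{r+1} > λ̂_i − λ̂_{i+1}; in particular, r is the unique maximizer of i ↦ λ̂_i − λ̂_{i+1} over {2,…,n−1}. -/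
/-- **Gap detection from perturbed eigenvalues.** If the `λ̂_i` are within `δ` of the model
eigenvalues and `K(p−q) > 4δ`, then the consecutive gap at position `r` strictly dominates
every other gap at positions `i ∈ {2,…,n−1}`, `i ≠ r`; in particular `r` is the unique
maximizer of `i ↦ λ̂_i − λ̂_{i+1}` over `{2,…,n−1}`. Here `n = rK`. -/
theorem gap_detection (r K : ℕ) (hr : 2 ≤ r) (hK : 2 ≤ K) (p q δ : ℝ)
    (hpq : q < p) (hδ : 0 ≤ δ)
    (lamhat : ℕ → ℝ)
    (hmono : ∀ i, 1 ≤ i → i < r * K → lamhat (i + 1) ≤ lamhat i)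
    (hpert1 : |lamhat 1 - ((K : ℝ) * (p - q) + (r * K : ℝ) * q + (1 - p))| ≤ δ)
    (hpert2 : ∀ i, 2 ≤ i → i ≤ r → |lamhat i - ((K : ℝ) * (p - q) + (1 - p))| ≤ δ)
    (hpert3 : ∀ i, r + 1 ≤ i → i ≤ r * K → |lamhat i - (1 - p)| ≤ δ)
    (hgap : 4 * δ < (K : ℝ) * (p - q)) :
    ∀ i, 2 ≤ i → i ≤ r * K - 1 → i ≠ r →
      lamhat i - lamhat (i + 1) < lamhat r - lamhat (r + 1) := by
  intro i hi2 hile hine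
  have hn : 4 ≤ r * K := Nat.mul_le_mul hr hK
  have hrK : r + 1 ≤ r * K := by nlinarith
  have hAr := hpert2 r hr le_rfl
  have hBr := hpert3 (r + 1) le_rfl hrK
  rw [abs_le] at hAr hBr
  rcases lt_or_gt_of_ne hine with h | h
  · have hA := hpert2 i hi2 h.le
    have hB := hpert2 (i + 1) (by omega) (by omega)
    rw [abs_le] at hA hB
    linarith [hA.1, hA.2, hB.1, hB.2, hAr.1, hAr.2, hBr.1, hBr.2]
  · have hA := hpert3 i (by omega) (by omega)
    have hB := hpert3 (i + 1) (by omega) (by omega)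
    rw [abs_le] at hA hB
    linarith [hA.1, hA.2, hB.1, hB.2, hAr.1, hAr.2, hBr.1, hBr.2]
end

section
/- Algebraic certificate inequality (in-cluster case): Let t, p, ε be real numbers with 0 < t ≤ p < 1 and ε ≥ 0. If p − t ≥ 8·p·(1−t)·ε, then (1+ε)·√(t/(1−t))·((1−p)/p) ≤ (1−2ε)·√((1−t)/t). -/
/-- **Algebraic certificate inequality (in-cluster case).** If `0 < t ≤ p < 1`, `ε ≥ 0`
and `p − t ≥ 8p(1−t)ε`, then `(1+ε)√(t/(1−t))·((1−p)/p) ≤ (1−2ε)√((1−t)/t)`. -/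
theorem certificate_ineq_in_cluster (t p ε : ℝ)
    (ht : 0 < t) (htp : t ≤ p) (hp : p < 1) (hε : 0 ≤ ε)
    (h : p - t ≥ 8 * p * (1 - t) * ε) :
    (1 + ε) * Real.sqrt (t / (1 - t)) * ((1 - p) / p) ≤
      (1 - 2 * ε) * Real.sqrt ((1 - t) / t) := by
  have h1t : 0 < 1 - t := by linarith
  have hp0 : 0 < p := lt_of_lt_of_le ht htp
  set a := Real.sqrt t with ha
  set b := Real.sqrt (1 - t) with hb
  have ha0 : 0 < a := Real.sqrt_pos.2 ht
  have hb0 : 0 < b := Real.sqrt_pos.2 h1t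
  have ha2 : a ^ 2 = t := Real.sq_sqrt ht.le
  have hb2 : b ^ 2 = 1 - t := Real.sq_sqrt h1t.le
  have hs1 : Real.sqrt (t / (1 - t)) = a / b := Real.sqrt_div ht.le _
  have hs2 : Real.sqrt ((1 - t) / t) = b / a := Real.sqrt_div h1t.le _
  have key : (1 + ε) * t * (1 - p) ≤ (1 - 2 * ε) * (1 - t) * p := by
    nlinarith [mul_nonneg hε (sub_nonneg.2 htp),
      mul_nonneg hε (mul_nonneg hp0.le h1t.le)]
  have key' : (1 + ε) * a ^ 2 * (1 - p) ≤ (1 - 2 * ε) * b ^ 2 * p := by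
    rw [ha2, hb2]; exact key
  rw [hs1, hs2]
  have e1 : (1 + ε) * (a / b) * ((1 - p) / p) = ((1 + ε) * a * (1 - p)) / (b * p) := by
    ring
  have e2 : (1 - 2 * ε) * (b / a) = ((1 - 2 * ε) * b) / a := by ring
  rw [e1, e2, div_le_div_iff₀ (by positivity) (by positivity)]
  nlinarith [key']
end

section
/- Algebraic certificate inequality (cross-cluster case): Let t, q, ε be real numbers with 0 < q ≤ t < 1 and ε ≥ 0. If t − q ≥ 2·t·(1−q)·ε, then (1+ε)·√((1−t)/t)·(q/(1−q)) ≤ (1−ε)·√(t/(1−t)). -/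
/-! Since `√((1-t)/t) = (√(t/(1-t)))⁻¹`, multiplying by `√(t/(1-t))` reduces the claim to the
inequality of odds `(1+ε)·q/(1-q) ≤ (1-ε)·t/(1-t)`. Clearing denominators, this is
`ε·(q(1-t) + t(1-q)) ≤ t - q`, and `q(1-t) + t(1-q) = 2t(1-q) - (t-q)` lies between `0` and
`2t(1-q)`. -/

lemma mul_cross_sum_le_sub {t q ε : ℝ} (hq : 0 < q) (hqt : q ≤ t) (ht : t < 1)
    (h : 2 * t * (1 - q) * ε ≤ t - q) : ε * (q * (1 - t) + t * (1 - q)) ≤ t - q := by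
  have hsum : q * (1 - t) + t * (1 - q) = 2 * t * (1 - q) - (t - q) := by ring
  rcases le_or_gt 0 ε with hε | hε
  · calc ε * (q * (1 - t) + t * (1 - q)) ≤ ε * (2 * t * (1 - q)) := by
          rw [hsum]; exact mul_le_mul_of_nonneg_left (by linarith) hε
      _ ≤ t - q := by linarith
  · have hsum_pos : 0 < q * (1 - t) + t * (1 - q) :=
      add_pos_of_pos_of_nonneg (mul_pos hq (by linarith)) (mul_nonneg (by linarith) (by linarith))
    linarith [mul_neg_of_neg_of_pos hε hsum_pos]

lemma one_add_mul_odds_le_one_sub_mul_odds {t q ε : ℝ} (hq : 0 < q) (hqt : q ≤ t)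
    (ht : t < 1) (h : 2 * t * (1 - q) * ε ≤ t - q) :
    (1 + ε) * (q / (1 - q)) ≤ (1 - ε) * (t / (1 - t)) := by
  rw [mul_div_assoc', mul_div_assoc', div_le_div_iff₀ (by linarith) (by linarith)]
  linarith [mul_cross_sum_le_sub hq hqt ht h]

theorem certificate_ineq_cross_cluster_general (t q ε : ℝ)
    (hq : 0 < q) (hqt : q ≤ t) (ht : t < 1)
    (h : t - q ≥ 2 * t * (1 - q) * ε) :
    (1 + ε) * Real.sqrt ((1 - t) / t) * (q / (1 - q)) ≤
      (1 - ε) * Real.sqrt (t / (1 - t)) := by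
  have hodds : 0 < t / (1 - t) := div_pos (hq.trans_le hqt) (by linarith)
  set b := Real.sqrt (t / (1 - t))
  have hb : 0 < b := Real.sqrt_pos.mpr hodds
  have hinv : Real.sqrt ((1 - t) / t) = b⁻¹ := by rw [← inv_div, Real.sqrt_inv]
  have hb_sq : b ^ 2 = t / (1 - t) := Real.sq_sqrt hodds.le
  calc (1 + ε) * Real.sqrt ((1 - t) / t) * (q / (1 - q))
      = (1 + ε) * (q / (1 - q)) / b := by rw [hinv]; ring
    _ ≤ (1 - ε) * (t / (1 - t)) / b :=
        div_le_div_of_nonneg_right (one_add_mul_odds_le_one_sub_mul_odds hq hqt ht h) hb.le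
    _ = (1 - ε) * b := by rw [← hb_sq]; field_simp

/-- **Algebraic certificate inequality (cross-cluster case).** If `0 < q ≤ t < 1`, `ε ≥ 0`
and `t − q ≥ 2t(1−q)ε`, then `(1+ε)√((1−t)/t)·(q/(1−q)) ≤ (1−ε)√(t/(1−t))`. -/
theorem certificate_ineq_cross_cluster (t q ε : ℝ)
    (hq : 0 < q) (hqt : q ≤ t) (ht : t < 1) (hε : 0 ≤ ε)
    (h : t - q ≥ 2 * t * (1 - q) * ε) :
    (1 + ε) * Real.sqrt ((1 - t) / t) * (q / (1 - q)) ≤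
      (1 - ε) * Real.sqrt (t / (1 - t)) :=
  certificate_ineq_cross_cluster_general t q ε hq hqt ht h
end
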